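/- Let Y be a centered random vector on ℝ^d with law μ_Y and E‖Y‖² < ∞, and ν a Lévy measure with ∫_{‖u‖≥1}‖u‖²ν(du) < ∞ and ν∗μ_Y ≪ μ_Y. Let H_ν(μ_Y) be the space of measurable f : ℝ^d → ℝ^d with ∫‖f(y)‖²μ_Y(dy) < ∞ and ∫∫‖f(y+u)−f(y)‖²ν(du)μ_Y(dy) < ∞, with inner product ⟨f,g⟩ = E⟨f(Y),g(Y)⟩ + A(f,g), where A(f,g) = E∫⟨f(Y+u)−f(Y), g(Y+u)−g(Y)⟩ν(du). Then H_ν(μ_Y) is a Hilbert space (it is complete for the induced norm). -/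

import Mathlib

open MeasureTheory
open scoped RealInnerProductSpace

/-- Convolution of a (Lévy) measure `ν` with a probability measure `μ` on `ℝ^d`:
`(ν ∗ μ)(B) = ∫∫ 1_B(u + y) ν(du) μ(dy)`. -/
noncomputable def convMeas {d : ℕ} (ν μ : Measure (EuclideanSpace ℝ (Fin d))) :
    Measure (EuclideanSpace ℝ (Fin d)) :=
  (ν.prod μ).map (fun p => p.1 + p.2)

/-- Membership in the space `H_ν(μY)`: Borel measurable `f : ℝ^d → ℝ^d` with
`∫‖f(y)‖² μY(dy) < ∞` and `∫∫‖f(y+u) - f(y)‖² ν(du) μY(dy) < ∞`. -/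
def memHnu {d : ℕ} (ν μY : Measure (EuclideanSpace ℝ (Fin d)))
    (f : EuclideanSpace ℝ (Fin d) → EuclideanSpace ℝ (Fin d)) : Prop :=
  Measurable f ∧ Integrable (fun y => ‖f y‖ ^ 2) μY ∧
    Integrable (fun p : EuclideanSpace ℝ (Fin d) × EuclideanSpace ℝ (Fin d) =>
      ‖f (p.2 + p.1) - f p.2‖ ^ 2) (ν.prod μY)

/-- The bilinear functional `A(f,g) = E ∫ ⟨f(Y+u) - f(Y), g(Y+u) - g(Y)⟩ ν(du)`. -/
noncomputable def bilinA {d : ℕ} (ν μY : Measure (EuclideanSpace ℝ (Fin d)))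
    (f g : EuclideanSpace ℝ (Fin d) → EuclideanSpace ℝ (Fin d)) : ℝ :=
  ∫ p : EuclideanSpace ℝ (Fin d) × EuclideanSpace ℝ (Fin d),
    (⟪f (p.2 + p.1) - f p.2, g (p.2 + p.1) - g p.2⟫ : ℝ) ∂(ν.prod μY)

/-- The norm of `H_ν(μY)` induced by the inner product
`⟨f,g⟩ = E⟨f(Y), g(Y)⟩ + A(f,g)`. -/
noncomputable def hnuNorm {d : ℕ} (ν μY : Measure (EuclideanSpace ℝ (Fin d)))
    (f : EuclideanSpace ℝ (Fin d) → EuclideanSpace ℝ (Fin d)) : ℝ :=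
  Real.sqrt ((∫ y, ‖f y‖ ^ 2 ∂μY) + bilinA ν μY f f)

/-! `f ↦ (f, increment f)` is an isometry from `H_ν(μ)` into `L²(μ) × L²(ν ⊗ μ)` (with the
Euclidean product norm), so a Cauchy sequence `fₙ` yields `L²`-limits `g` of `fₙ` and `H` of
`increment fₙ`. Along a subsequence `fₙ → g` holds `μ`-a.e.; since `ν ∗ μ ≪ μ`, the map
`(u, y) ↦ y + u` pulls `μ`-null sets back to `ν ⊗ μ`-null sets, so `increment fₙ → increment g`
holds `ν ⊗ μ`-a.e. along that subsequence. Hence `H = increment g` a.e., which gives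
`g ∈ H_ν(μ)` and `fₙ → g` in `H_ν(μ)`. -/

open Filter Topology
open scoped ENNReal

section L2

variable {α F : Type*} [MeasurableSpace α] {μ : Measure α} [NormedAddCommGroup F]

lemma integral_norm_sq_eq_lpNorm_sq {f : α → F} (hf : AEStronglyMeasurable f μ) :
    ∫ x, ‖f x‖ ^ 2 ∂μ = lpNorm f 2 μ ^ 2 := by
  have hnonneg : 0 ≤ ∫ x, ‖f x‖ ^ 2 ∂μ := integral_nonneg fun x => sq_nonneg _
  rw [lpNorm_eq_integral_norm_rpow_toReal two_ne_zero ENNReal.ofNat_ne_top hf]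
  norm_num [← Real.sqrt_eq_rpow, Real.sq_sqrt hnonneg]

lemma exists_tendsto_eLpNorm_of_cauchy [CompleteSpace F] {p : ℝ≥0∞} [Fact (1 ≤ p)]
    {f : ℕ → α → F} (hf : ∀ n, MemLp (f n) p μ)
    (hcau : ∀ ε > 0, ∃ N, ∀ m n, N ≤ m → N ≤ n → lpNorm (f m - f n) p μ < ε) :
    ∃ g : α → F, StronglyMeasurable g ∧ MemLp g p μ ∧
      Tendsto (fun n => eLpNorm (f n - g) p μ) atTop (𝓝 0) := by
  have hdist : ∀ m n,
      dist ((hf m).toLp (f m)) ((hf n).toLp (f n)) = lpNorm (f m - f n) p μ := by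
    intro m n
    rw [dist_eq_norm, ← MemLp.toLp_sub, Lp.norm_toLp, toReal_eLpNorm ((hf m).sub (hf n)).1]
  have hcauchy : CauchySeq fun n => (hf n).toLp (f n) :=
    Metric.cauchySeq_iff.2 fun ε hε => (hcau ε hε).imp fun N hN m hm n hn => by
      rw [hdist]; exact hN m n hm hn
  obtain ⟨G, hG⟩ := cauchySeq_tendsto_of_complete hcauchy
  refine ⟨G, Lp.stronglyMeasurable G, Lp.memLp G, ?_⟩
  rw [← Lp.toLp_coeFn G (Lp.memLp G)] at hG
  exact (Lp.tendsto_Lp_iff_tendsto_eLpNorm'' f hf G (Lp.memLp G)).1 hG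

lemma tendsto_lpNorm_of_tendsto_eLpNorm {p : ℝ≥0∞} {f : ℕ → α → F}
    (hf : ∀ n, AEStronglyMeasurable (f n) μ)
    (hf0 : Tendsto (fun n => eLpNorm (f n) p μ) atTop (𝓝 0)) :
    Tendsto (fun n => lpNorm (f n) p μ) atTop (𝓝 0) := by
  have h := (ENNReal.tendsto_toReal ENNReal.zero_ne_top).comp hf0
  rw [ENNReal.toReal_zero] at h
  exact h.congr fun n => toReal_eLpNorm (hf n)

end L2

section Increment

variable {d : ℕ} {ν μ : Measure (EuclideanSpace ℝ (Fin d))}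

local notation "ℝᵈ" => EuclideanSpace ℝ (Fin d)

def increment (f : ℝᵈ → ℝᵈ) (p : ℝᵈ × ℝᵈ) : ℝᵈ := f (p.2 + p.1) - f p.2

lemma increment_sub (f g : ℝᵈ → ℝᵈ) : increment (f - g) = increment f - increment g := by
  funext p
  simp only [increment, Pi.sub_apply]
  abel

lemma Measurable.increment {f : ℝᵈ → ℝᵈ} (hf : Measurable f) : Measurable (increment f) :=
  (hf.comp (measurable_snd.add measurable_fst)).sub (hf.comp measurable_snd)

lemma memHnu_iff {f : ℝᵈ → ℝᵈ} :
    memHnu ν μ f ↔ Measurable f ∧ MemLp f 2 μ ∧ MemLp (increment f) 2 (ν.prod μ) := by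
  refine and_congr_right fun hf => and_congr ?_ ?_
  · exact (memLp_two_iff_integrable_sq_norm hf.aestronglyMeasurable).symm
  · exact (memLp_two_iff_integrable_sq_norm hf.increment.aestronglyMeasurable).symm

lemma hnuNorm_eq {f : ℝᵈ → ℝᵈ} (hf : Measurable f) :
    hnuNorm ν μ f = √(lpNorm f 2 μ ^ 2 + lpNorm (increment f) 2 (ν.prod μ) ^ 2) := by
  rw [hnuNorm, bilinA, integral_norm_sq_eq_lpNorm_sq hf.aestronglyMeasurable]
  simp_rw [real_inner_self_eq_norm_sq]
  rw [← integral_norm_sq_eq_lpNorm_sq hf.increment.aestronglyMeasurable]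
  rfl

lemma lpNorm_le_hnuNorm {f : ℝᵈ → ℝᵈ} (hf : Measurable f) :
    lpNorm f 2 μ ≤ hnuNorm ν μ f := by
  rw [hnuNorm_eq hf]
  exact Real.le_sqrt_of_sq_le (le_add_of_nonneg_right (sq_nonneg _))

lemma lpNorm_increment_le_hnuNorm {f : ℝᵈ → ℝᵈ} (hf : Measurable f) :
    lpNorm (increment f) 2 (ν.prod μ) ≤ hnuNorm ν μ f := by
  rw [hnuNorm_eq hf]
  exact Real.le_sqrt_of_sq_le (le_add_of_nonneg_left (sq_nonneg _))

lemma tendsto_hnuNorm_zero {f : ℕ → ℝᵈ → ℝᵈ} (hf : ∀ n, Measurable (f n))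
    (hL2 : Tendsto (fun n => eLpNorm (f n) 2 μ) atTop (𝓝 0))
    (hL2_increment : Tendsto (fun n => eLpNorm (increment (f n)) 2 (ν.prod μ)) atTop (𝓝 0)) :
    Tendsto (fun n => hnuNorm ν μ (f n)) atTop (𝓝 0) := by
  have h₁ := tendsto_lpNorm_of_tendsto_eLpNorm (fun n => (hf n).aestronglyMeasurable) hL2
  have h₂ := tendsto_lpNorm_of_tendsto_eLpNorm (fun n => (hf n).increment.aestronglyMeasurable)
    hL2_increment
  have hsum := (h₁.pow 2).add (h₂.pow 2)
  have hsqrt := (Real.continuous_sqrt.tendsto _).comp hsum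
  rw [zero_pow two_ne_zero, add_zero, Real.sqrt_zero] at hsqrt
  exact hsqrt.congr fun n => (hnuNorm_eq (hf n)).symm

lemma quasiMeasurePreserving_add_of_convMeas_ac (habs : convMeas ν μ ≪ μ) :
    Measure.QuasiMeasurePreserving (fun p : ℝᵈ × ℝᵈ => p.2 + p.1) (ν.prod μ) μ := by
  refine ⟨by fun_prop, ?_⟩
  simpa only [convMeas, add_comm] using habs

lemma ae_tendsto_increment (habs : convMeas ν μ ≪ μ) {f : ℕ → ℝᵈ → ℝᵈ} {g : ℝᵈ → ℝᵈ}
    (hfg : ∀ᵐ y ∂μ, Tendsto (fun n => f n y) atTop (𝓝 (g y))) :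
    ∀ᵐ p ∂ν.prod μ, Tendsto (fun n => increment (f n) p) atTop (𝓝 (increment g p)) := by
  filter_upwards [(quasiMeasurePreserving_add_of_convMeas_ac habs).ae hfg,
    Measure.quasiMeasurePreserving_snd.ae hfg] with p h_shifted h_base
  exact h_shifted.sub h_base

lemma increment_ae_eq_of_tendstoInMeasure (habs : convMeas ν μ ≪ μ) {f : ℕ → ℝᵈ → ℝᵈ}
    {g : ℝᵈ → ℝᵈ} {H : ℝᵈ × ℝᵈ → ℝᵈ} (hfg : TendstoInMeasure μ f atTop g)
    (hfH : TendstoInMeasure (ν.prod μ) (fun n => increment (f n)) atTop H) :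
    increment g =ᵐ[ν.prod μ] H := by
  obtain ⟨ns, hns, hfg_ae⟩ := hfg.exists_seq_tendsto_ae
  obtain ⟨ms, hms, hfH_ae⟩ := (hfH.comp hns.tendsto_atTop).exists_seq_tendsto_ae
  filter_upwards [ae_tendsto_increment habs hfg_ae, hfH_ae] with p hg hH
  exact tendsto_nhds_unique (hg.comp hms.tendsto_atTop) hH

end Increment

theorem Hnu_complete_general (d : ℕ) (ν μY : Measure (EuclideanSpace ℝ (Fin d)))
    (habs : convMeas ν μY ≪ μY) :
    ∀ f : ℕ → EuclideanSpace ℝ (Fin d) → EuclideanSpace ℝ (Fin d),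
      (∀ n, memHnu ν μY (f n)) →
      (∀ ε : ℝ, 0 < ε → ∃ N : ℕ, ∀ m n : ℕ, N ≤ m → N ≤ n →
        hnuNorm ν μY (f m - f n) < ε) →
      ∃ g : EuclideanSpace ℝ (Fin d) → EuclideanSpace ℝ (Fin d), memHnu ν μY g ∧
        Filter.Tendsto (fun n => hnuNorm ν μY (f n - g)) Filter.atTop (nhds 0) := by
  intro f hf hcau
  choose hmeas hL2 hL2_increment using fun n => memHnu_iff.1 (hf n)
  have hmeas_sub : ∀ m n, Measurable (f m - f n) := fun m n => (hmeas m).sub (hmeas n)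
  obtain ⟨g, hg_meas, hgL2, hfg⟩ := exists_tendsto_eLpNorm_of_cauchy hL2 fun ε hε =>
    (hcau ε hε).imp fun N hN m n hm hn =>
      (lpNorm_le_hnuNorm (hmeas_sub m n)).trans_lt (hN m n hm hn)
  obtain ⟨H, -, hHL2, hfH⟩ := exists_tendsto_eLpNorm_of_cauchy hL2_increment fun ε hε =>
    (hcau ε hε).imp fun N hN m n hm hn => by
      rw [← increment_sub]
      exact (lpNorm_increment_le_hnuNorm (hmeas_sub m n)).trans_lt (hN m n hm hn)
  have hgH : increment g =ᵐ[ν.prod μY] H := increment_ae_eq_of_tendstoInMeasure habs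
    (tendstoInMeasure_of_tendsto_eLpNorm two_ne_zero (fun n => (hL2 n).1) hgL2.1 hfg)
    (tendstoInMeasure_of_tendsto_eLpNorm two_ne_zero (fun n => (hL2_increment n).1) hHL2.1 hfH)
  refine ⟨g, memHnu_iff.2 ⟨hg_meas.measurable, hgL2, (memLp_congr_ae hgH).2 hHL2⟩, ?_⟩
  refine tendsto_hnuNorm_zero (fun n => (hmeas n).sub hg_meas.measurable) hfg ?_
  simp_rw [increment_sub]
  exact hfH.congr fun n => eLpNorm_congr_ae (EventuallyEq.rfl.sub hgH.symm)

/-- Let `Y` be a centered random vector with `E‖Y‖² < ∞`, and `ν` a Lévy measure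
with `∫_{‖u‖≥1}‖u‖² ν(du) < ∞` and `ν ∗ μY ≪ μY`.  Then `H_ν(μY)`, with the inner product
`⟨f,g⟩ = E⟨f(Y),g(Y)⟩ + A(f,g)` (functions identified `μY`-a.e.), is a Hilbert space: every
Cauchy sequence for the induced norm converges in the space. -/
theorem Hnu_complete (d : ℕ) (ν μY : Measure (EuclideanSpace ℝ (Fin d)))
    (hprobY : IsProbabilityMeasure μY)
    (hcentY : ∫ y, y ∂μY = 0)
    (hmom2Y : Integrable (fun y => ‖y‖ ^ 2) μY)
    (hsf : SigmaFinite ν)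
    (hzero : ν {0} = 0)
    (hlevy : ∫⁻ u, ENNReal.ofReal (min 1 (‖u‖ ^ 2)) ∂ν < ⊤)
    (hbig : IntegrableOn (fun u => ‖u‖ ^ 2) {u : EuclideanSpace ℝ (Fin d) | 1 ≤ ‖u‖} ν)
    (habs : convMeas ν μY ≪ μY) :
    ∀ f : ℕ → EuclideanSpace ℝ (Fin d) → EuclideanSpace ℝ (Fin d),
      (∀ n, memHnu ν μY (f n)) →
      (∀ ε : ℝ, 0 < ε → ∃ N : ℕ, ∀ m n : ℕ, N ≤ m → N ≤ n →
        hnuNorm ν μY (f m - f n) < ε) →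
      ∃ g : EuclideanSpace ℝ (Fin d) → EuclideanSpace ℝ (Fin d), memHnu ν μY g ∧
        Filter.Tendsto (fun n => hnuNorm ν μY (f n - g)) Filter.atTop (nhds 0) :=
  Hnu_complete_general d ν μY habs
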